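/- arXiv:1902.01744 — 5 statements merged into one kernel-verified Lean document; each statement's English description precedes it below -/
import Mathlib

section
/- Let Ω ⊂ ℝ² be a connected open set, let u be real analytic on Ω, and let Φ : ℝ² → ℝ be a function that is not identically zero on any nonempty open subset of ℝ², such that Φ(Δu(p), det D²u(p)) = 0 for every p ∈ Ω. Then the Jacobian J[Δu, det D²u] vanishes identically on Ω. -/
open Set Metric Topology Asymptotics MvPolynomial Matrix

/-- Partial derivative with respect to the first variable. -/
noncomputable def pdx (f : ℝ × ℝ → ℝ) (p : ℝ × ℝ) : ℝ :=
  deriv (fun x => f (x, p.2)) p.1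

/-- Partial derivative with respect to the second variable. -/
noncomputable def pdy (f : ℝ × ℝ → ℝ) (p : ℝ × ℝ) : ℝ :=
  deriv (fun y => f (p.1, y)) p.2

/-- The Laplacian `Δu = u_xx + u_yy`. -/
noncomputable def lap (f : ℝ × ℝ → ℝ) (p : ℝ × ℝ) : ℝ :=
  pdx (pdx f) p + pdy (pdy f) p

/-- The Hessian determinant `det D²u = u_xx u_yy - u_xy²`. -/
noncomputable def hessDet (f : ℝ × ℝ → ℝ) (p : ℝ × ℝ) : ℝ :=
  pdx (pdx f) p * pdy (pdy f) p - (pdx (pdy f) p) ^ 2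

/-- The Jacobian `J[f,g] = f_x g_y - f_y g_x`. -/
noncomputable def jacDet (f g : ℝ × ℝ → ℝ) (p : ℝ × ℝ) : ℝ :=
  pdx f p * pdy g p - pdy f p * pdx g p

/-!
If `J[Δu, det D²u](p) ≠ 0`, the inverse function theorem makes `q ↦ (Δu(q), det D²u(q))` map
every neighbourhood of `p` onto a neighbourhood of `(Δu(p), det D²u(p))`. Then `Φ` vanishes on a
nonempty open set, which is excluded.
-/

lemma pdx_eq_fderiv {f : ℝ × ℝ → ℝ} {p : ℝ × ℝ} (hf : DifferentiableAt ℝ f p) :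
    pdx f p = fderiv ℝ f p (1, 0) :=
  (hf.hasFDerivAt.comp_hasDerivAt p.1
    ((hasDerivAt_id p.1).prodMk (hasDerivAt_const p.1 p.2))).deriv

lemma pdy_eq_fderiv {f : ℝ × ℝ → ℝ} {p : ℝ × ℝ} (hf : DifferentiableAt ℝ f p) :
    pdy f p = fderiv ℝ f p (0, 1) :=
  (hf.hasFDerivAt.comp_hasDerivAt p.2
    ((hasDerivAt_const p.2 p.1).prodMk (hasDerivAt_id p.2))).deriv

section Analytic

variable {f : ℝ × ℝ → ℝ} {s : Set (ℝ × ℝ)}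

lemma AnalyticOnNhd.pdx (hf : AnalyticOnNhd ℝ f s) (hs : IsOpen s) :
    AnalyticOnNhd ℝ (pdx f) s :=
  ((ContinuousLinearMap.apply ℝ ℝ ((1, 0) : ℝ × ℝ)).comp_analyticOnNhd hf.fderiv).congr hs
    fun q hq => (pdx_eq_fderiv (hf q hq).differentiableAt).symm

lemma AnalyticOnNhd.pdy (hf : AnalyticOnNhd ℝ f s) (hs : IsOpen s) :
    AnalyticOnNhd ℝ (pdy f) s :=
  ((ContinuousLinearMap.apply ℝ ℝ ((0, 1) : ℝ × ℝ)).comp_analyticOnNhd hf.fderiv).congr hs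
    fun q hq => (pdy_eq_fderiv (hf q hq).differentiableAt).symm

lemma AnalyticOnNhd.lap (hf : AnalyticOnNhd ℝ f s) (hs : IsOpen s) :
    AnalyticOnNhd ℝ (lap f) s :=
  ((hf.pdx hs).pdx hs).add ((hf.pdy hs).pdy hs)

lemma AnalyticOnNhd.hessDet (hf : AnalyticOnNhd ℝ f s) (hs : IsOpen s) :
    AnalyticOnNhd ℝ (hessDet f) s :=
  (((hf.pdx hs).pdx hs).mul ((hf.pdy hs).pdy hs)).sub (((hf.pdy hs).pdx hs).pow 2)

end Analytic

lemma ContinuousLinearMap.map_pair (T : (ℝ × ℝ) →L[ℝ] ℝ) (x y : ℝ) :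
    T (x, y) = x * T (1, 0) + y * T (0, 1) := by
  have hxy : ((x, y) : ℝ × ℝ) = x • ((1, 0) : ℝ × ℝ) + y • ((0, 1) : ℝ × ℝ) := by simp
  rw [hxy, map_add, map_smul, map_smul, smul_eq_mul, smul_eq_mul]

lemma ContinuousLinearMap.range_prod_eq_top_of_det_ne_zero (φ ψ : (ℝ × ℝ) →L[ℝ] ℝ)
    (h : φ (1, 0) * ψ (0, 1) - φ (0, 1) * ψ (1, 0) ≠ 0) : (φ.prod ψ).range = ⊤ := by
  have hφ := φ.map_pair
  have hψ := ψ.map_pair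
  set a := φ (1, 0)
  set b := φ (0, 1)
  set c := ψ (1, 0)
  set d := ψ (0, 1)
  refine LinearMap.range_eq_top.2 fun ⟨x, y⟩ =>
    ⟨((d * x - b * y) / (a * d - b * c), (a * y - c * x) / (a * d - b * c)), ?_⟩
  change (φ _, ψ _) = _
  rw [hφ, hψ, Prod.mk.injEq]
  constructor <;> rw [div_mul_eq_mul_div, div_mul_eq_mul_div, ← add_div, div_eq_iff h] <;>
    ring

lemma image_mem_nhds_of_jacDet_ne_zero {f g : ℝ × ℝ → ℝ} {p : ℝ × ℝ} {s : Set (ℝ × ℝ)}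
    (hf : ContDiffAt ℝ 1 f p) (hg : ContDiffAt ℝ 1 g p) (hJ : jacDet f g p ≠ 0)
    (hs : s ∈ 𝓝 p) : (fun q => (f q, g q)) '' s ∈ 𝓝 (f p, g p) := by
  have hF := (hf.hasStrictFDerivAt one_ne_zero).prodMk (hg.hasStrictFDerivAt one_ne_zero)
  have hf' := hf.differentiableAt one_ne_zero
  have hg' := hg.differentiableAt one_ne_zero
  rw [jacDet, pdx_eq_fderiv hf', pdy_eq_fderiv hf', pdx_eq_fderiv hg', pdy_eq_fderiv hg'] at hJ
  rw [← hF.map_nhds_eq_of_surj (ContinuousLinearMap.range_prod_eq_top_of_det_ne_zero _ _ hJ)]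
  exact Filter.image_mem_map hs

lemma jacDet_eq_zero_of_comp_eq_zero {f g : ℝ × ℝ → ℝ} {p : ℝ × ℝ} {s : Set (ℝ × ℝ)}
    (hf : ContDiffAt ℝ 1 f p) (hg : ContDiffAt ℝ 1 g p) (hs : s ∈ 𝓝 p) (Φ : ℝ × ℝ → ℝ)
    (hΦnz : ∀ U : Set (ℝ × ℝ), IsOpen U → U.Nonempty → ∃ z ∈ U, Φ z ≠ 0)
    (hΦ : ∀ q ∈ s, Φ (f q, g q) = 0) : jacDet f g p = 0 := by
  by_contra hJ
  have himg := image_mem_nhds_of_jacDet_ne_zero hf hg hJ hs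
  obtain ⟨z, hz, hΦz⟩ := hΦnz _ isOpen_interior ⟨_, mem_interior_iff_mem_nhds.2 himg⟩
  obtain ⟨q, hq, rfl⟩ := interior_subset hz
  exact hΦz (hΦ q hq)

theorem jacobian_vanishes_of_functional_relation_general
    (Ω : Set (ℝ × ℝ)) (hΩopen : IsOpen Ω)
    (u : ℝ × ℝ → ℝ) (hu : AnalyticOnNhd ℝ u Ω)
    (Φ : ℝ × ℝ → ℝ)
    (hΦnz : ∀ U : Set (ℝ × ℝ), IsOpen U → U.Nonempty → ∃ z ∈ U, Φ z ≠ 0)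
    (hΦ : ∀ p ∈ Ω, Φ (lap u p, hessDet u p) = 0) :
    ∀ p ∈ Ω, jacDet (lap u) (hessDet u) p = 0 := fun p hp =>
  jacDet_eq_zero_of_comp_eq_zero (hu.lap hΩopen p hp).contDiffAt
    (hu.hessDet hΩopen p hp).contDiffAt (hΩopen.mem_nhds hp) Φ hΦnz hΦ

/-- If `u` is real analytic on a connected open set `Ω ⊂ ℝ²` and
`Φ(Δu, det D²u) = 0` on `Ω` for some `Φ : ℝ² → ℝ` that is not identically zero on any
nonempty open subset of `ℝ²`, then the Jacobian `J[Δu, det D²u]` vanishes identically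
on `Ω`. -/
theorem jacobian_vanishes_of_functional_relation
    (Ω : Set (ℝ × ℝ)) (hΩopen : IsOpen Ω) (hΩconn : IsConnected Ω)
    (u : ℝ × ℝ → ℝ) (hu : AnalyticOnNhd ℝ u Ω)
    (Φ : ℝ × ℝ → ℝ)
    (hΦnz : ∀ U : Set (ℝ × ℝ), IsOpen U → U.Nonempty → ∃ z ∈ U, Φ z ≠ 0)
    (hΦ : ∀ p ∈ Ω, Φ (lap u p, hessDet u p) = 0) :
    ∀ p ∈ Ω, jacDet (lap u) (hessDet u) p = 0 :=
  jacobian_vanishes_of_functional_relation_general Ω hΩopen u hu Φ hΦnz hΦ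
end

section
/- Let w be a non-zero harmonic homogeneous polynomial on ℝ² of degree k ≥ 2. Then det D²w(p) < 0 for every p ∈ ℝ² with p ≠ (0,0). -/
/-!
Harmonicity makes `(w_xx, -w_xy)` a Cauchy–Riemann pair (a polynomial `u + iv` holomorphic
in `x + iy`), and `det D²w = w_xx w_yy - w_xy² = -(w_xx² + w_xy²)`. So it suffices that a
nonzero Cauchy–Riemann pair `(u, v)` of homogeneous polynomials has no common zero `p ≠ 0`.
At such a zero, Euler's identity and the Cauchy–Riemann equations give `x A - y B = 0` and
`x B + y A = 0` for `A = u_x(p)`, `B = v_x(p)`, hence `A = B = 0`: the pair `(u_x, v_x)`,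
of lower degree, vanishes at `p` too. By induction on the degree `u_x = v_x = 0`, so all
first derivatives of `u` and `v` vanish and Euler's identity forces `u = v = 0`.
-/

open Set Metric Topology Asymptotics MvPolynomial Matrix

namespace MvPolynomial

theorem pderiv_comm {R σ : Type*} [CommSemiring R] (i j : σ) (p : MvPolynomial σ R) :
    pderiv i (pderiv j p) = pderiv j (pderiv i p) := by
  classical
  induction p using MvPolynomial.induction_on' with
  | add p q hp hq => simp [hp, hq]
  | monomial d a =>
    rcases eq_or_ne i j with rfl | hij
    · rfl
    simp only [pderiv_monomial]
    have hji : (d - Finsupp.single j 1 : σ →₀ ℕ) i = d i := by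
      rw [Finsupp.tsub_apply, Finsupp.single_eq_of_ne hij, Nat.sub_zero]
    have hij' : (d - Finsupp.single i 1 : σ →₀ ℕ) j = d j := by
      rw [Finsupp.tsub_apply, Finsupp.single_eq_of_ne hij.symm, Nat.sub_zero]
    rw [hji, hij', tsub_tsub, tsub_tsub, add_comm (Finsupp.single j 1)]
    ring_nf

theorem hasDerivAt_eval_update {𝕜 σ : Type*} [NontriviallyNormedField 𝕜] [DecidableEq σ]
    (P : MvPolynomial σ 𝕜) (x : σ → 𝕜) (i : σ) (t : 𝕜) :
    HasDerivAt (fun s => eval (Function.update x i s) P)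
      (eval (Function.update x i t) (pderiv i P)) t := by
  induction P using MvPolynomial.induction_on with
  | C a => simpa using hasDerivAt_const t a
  | add p q hp hq => simp only [map_add]; exact hp.add hq
  | mul_X p j hp =>
    rcases eq_or_ne j i with rfl | hji
    · simp only [map_mul, eval_X, pderiv_mul, pderiv_X_self, map_add, mul_one,
        Function.update_self]
      exact (hp.mul (hasDerivAt_id' t)).congr_deriv (by rw [mul_one])
    · simpa [pderiv_mul, pderiv_X_of_ne hji, Function.update_of_ne hji, mul_comm]
        using hp.mul_const (x j)

theorem IsHomogeneous.eq_zero_of_forall_pderiv_eq_zero {R σ : Type*} [CommRing R] [IsDomain R]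
    [CharZero R] [Fintype σ] {φ : MvPolynomial σ R} {n : ℕ} (hφ : φ.IsHomogeneous n)
    (hn : n ≠ 0) (h : ∀ i, pderiv i φ = 0) : φ = 0 := by
  have euler := hφ.sum_X_mul_pderiv
  simp only [h, mul_zero, Finset.sum_const_zero] at euler
  exact (smul_eq_zero.mp euler.symm).resolve_left hn

end MvPolynomial

namespace MvPolynomial

structure IsCauchyRiemannPair {R : Type*} [CommRing R] (u v : MvPolynomial (Fin 2) R) : Prop where
  pderiv_zero_eq : pderiv 0 u = pderiv 1 v
  pderiv_one_eq : pderiv 1 u = -pderiv 0 v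

namespace IsCauchyRiemannPair

variable {R : Type*} [CommRing R] {u v : MvPolynomial (Fin 2) R} {n : ℕ}

theorem of_laplace_eq_zero {w : MvPolynomial (Fin 2) R}
    (h : pderiv 0 (pderiv 0 w) + pderiv 1 (pderiv 1 w) = 0) :
    IsCauchyRiemannPair (pderiv 0 w) (-pderiv 1 w) where
  pderiv_zero_eq := by rw [map_neg, eq_neg_of_add_eq_zero_left h]
  pderiv_one_eq := by rw [map_neg, neg_neg, pderiv_comm]

theorem pderiv_zero (h : IsCauchyRiemannPair u v) :
    IsCauchyRiemannPair (pderiv 0 u) (pderiv 0 v) where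
  pderiv_zero_eq := by rw [h.pderiv_zero_eq, pderiv_comm]
  pderiv_one_eq := by rw [pderiv_comm, h.pderiv_one_eq, map_neg]

theorem eq_zero_of_pderiv_zero_eq_zero [IsDomain R] [CharZero R] (h : IsCauchyRiemannPair u v)
    (hu : u.IsHomogeneous n) (hv : v.IsHomogeneous n) (hn : n ≠ 0)
    (hu0 : pderiv 0 u = 0) (hv0 : pderiv 0 v = 0) : u = 0 ∧ v = 0 := by
  refine ⟨hu.eq_zero_of_forall_pderiv_eq_zero hn ?_, hv.eq_zero_of_forall_pderiv_eq_zero hn ?_⟩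
  · simp [Fin.forall_fin_two, hu0, h.pderiv_one_eq, hv0]
  · simp [Fin.forall_fin_two, hv0, ← h.pderiv_zero_eq, hu0]

section Ordered

variable [LinearOrder R] [IsStrictOrderedRing R] {x : Fin 2 → R}

theorem eval_pderiv_zero_eq_zero (h : IsCauchyRiemannPair u v)
    (hu : u.IsHomogeneous n) (hv : v.IsHomogeneous n) (hx : x ≠ 0)
    (hux : eval x u = 0) (hvx : eval x v = 0) :
    eval x (pderiv 0 u) = 0 ∧ eval x (pderiv 0 v) = 0 := by
  have euler_u := congrArg (eval x) hu.sum_X_mul_pderiv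
  have euler_v := congrArg (eval x) hv.sum_X_mul_pderiv
  simp only [Fin.sum_univ_two, map_add, map_mul, eval_X, map_nsmul, hux, hvx, smul_zero,
    h.pderiv_one_eq, ← h.pderiv_zero_eq, map_neg] at euler_u euler_v
  have hpos : 0 < x 0 ^ 2 + x 1 ^ 2 := by
    obtain ⟨i, hi⟩ := Function.ne_iff.mp hx
    fin_cases i <;> simp only [Pi.zero_apply] at hi <;> positivity
  constructor
  · refine (mul_eq_zero.mp ?_).resolve_left hpos.ne'
    linear_combination x 0 * euler_u + x 1 * euler_v
  · refine (mul_eq_zero.mp ?_).resolve_left hpos.ne'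
    linear_combination x 0 * euler_v - x 1 * euler_u

theorem eq_zero_of_eval_eq_zero (h : IsCauchyRiemannPair u v)
    (hu : u.IsHomogeneous n) (hv : v.IsHomogeneous n) (hx : x ≠ 0)
    (hux : eval x u = 0) (hvx : eval x v = 0) : u = 0 ∧ v = 0 := by
  induction n generalizing u v with
  | zero =>
    rw [← totalDegree_zero_iff_isHomogeneous, totalDegree_eq_zero_iff_eq_C] at hu hv
    rw [hu, eval_C] at hux
    rw [hv, eval_C] at hvx
    rw [hu, hv, hux, hvx, map_zero, and_self]
  | succ n ih =>
    obtain ⟨hux', hvx'⟩ := h.eval_pderiv_zero_eq_zero hu hv hx hux hvx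
    obtain ⟨hu0, hv0⟩ := ih h.pderiv_zero hu.pderiv hv.pderiv hux' hvx'
    exact h.eq_zero_of_pderiv_zero_eq_zero hu hv n.succ_ne_zero hu0 hv0

end Ordered

end IsCauchyRiemannPair

end MvPolynomial

theorem pdx_eval (P : MvPolynomial (Fin 2) ℝ) :
    pdx (fun q : ℝ × ℝ => eval ![q.1, q.2] P) = fun q => eval ![q.1, q.2] (pderiv 0 P) := by
  funext q
  have hline : (fun s : ℝ => ![s, q.2]) = Function.update ![q.1, q.2] 0 := by
    ext s j; fin_cases j <;> rfl
  simpa only [pdx, ← hline] using (hasDerivAt_eval_update P ![q.1, q.2] 0 q.1).deriv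

theorem pdy_eval (P : MvPolynomial (Fin 2) ℝ) :
    pdy (fun q : ℝ × ℝ => eval ![q.1, q.2] P) = fun q => eval ![q.1, q.2] (pderiv 1 P) := by
  funext q
  have hline : (fun s : ℝ => ![q.1, s]) = Function.update ![q.1, q.2] 1 := by
    ext s j; fin_cases j <;> rfl
  simpa only [pdy, ← hline] using (hasDerivAt_eval_update P ![q.1, q.2] 1 q.2).deriv

theorem laplace_eq_zero_of_lap_eval_eq_zero {w : MvPolynomial (Fin 2) ℝ}
    (h : ∀ p : ℝ × ℝ, lap (fun q : ℝ × ℝ => eval ![q.1, q.2] w) p = 0) :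
    pderiv 0 (pderiv 0 w) + pderiv 1 (pderiv 1 w) = 0 := by
  refine MvPolynomial.funext fun x => ?_
  have hx : ![x 0, x 1] = x := by ext j; fin_cases j <;> rfl
  simpa [lap, pdx_eval, pdy_eval, hx] using h (x 0, x 1)

/-- If `w` is a non-zero harmonic homogeneous polynomial on `ℝ²` of degree `k ≥ 2`, then
`det D²w < 0` away from the origin. -/
theorem harmonic_homogeneous_hessian_negative
    (k : ℕ) (hk : 2 ≤ k)
    (w : MvPolynomial (Fin 2) ℝ) (hw : w ≠ 0) (hwhom : w.IsHomogeneous k)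
    (hwharm : ∀ p : ℝ × ℝ,
      lap (fun q : ℝ × ℝ => MvPolynomial.eval ![q.1, q.2] w) p = 0) :
    ∀ p : ℝ × ℝ, p ≠ (0, 0) →
      hessDet (fun q : ℝ × ℝ => MvPolynomial.eval ![q.1, q.2] w) p < 0 := by
  intro p hp
  have hΔ := laplace_eq_zero_of_lap_eval_eq_zero hwharm
  have hgrad := IsCauchyRiemannPair.of_laplace_eq_zero hΔ
  have hhess : IsCauchyRiemannPair (pderiv 0 (pderiv 0 w)) (-pderiv 0 (pderiv 1 w)) := by
    simpa using hgrad.pderiv_zero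
  have hhess_ne : ¬(pderiv 0 (pderiv 0 w) = 0 ∧ -pderiv 0 (pderiv 1 w) = 0) := by
    rintro ⟨hxx, hxy⟩
    obtain ⟨hwx, hwy⟩ := hgrad.eq_zero_of_pderiv_zero_eq_zero hwhom.pderiv hwhom.pderiv.neg
      (by omega) hxx (by rwa [map_neg])
    refine hw (hwhom.eq_zero_of_forall_pderiv_eq_zero (by omega) ?_)
    simpa [Fin.forall_fin_two, hwx] using hwy
  have hp' : ![p.1, p.2] ≠ 0 := fun h0 => hp (Prod.ext (congrFun h0 0) (congrFun h0 1))
  set A := eval ![p.1, p.2] (pderiv 0 (pderiv 0 w))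
  set B := eval ![p.1, p.2] (pderiv 0 (pderiv 1 w))
  have hAB : A ≠ 0 ∨ B ≠ 0 := by
    by_contra! h
    exact hhess_ne (hhess.eq_zero_of_eval_eq_zero hwhom.pderiv.pderiv hwhom.pderiv.pderiv.neg hp'
      h.1 (by rw [map_neg, neg_eq_zero]; exact h.2))
  have hdet : hessDet (fun q : ℝ × ℝ => eval ![q.1, q.2] w) p = -(A ^ 2 + B ^ 2) := by
    simp only [hessDet, pdx_eval, pdy_eval, eq_neg_of_add_eq_zero_right hΔ, map_neg]
    ring
  rw [hdet, neg_neg_iff_pos]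
  rcases hAB with h | h <;> positivity
end

section
/- Let γ = (γ₁, γ₂) : I → ℝ² be a C² unit-speed curve on an interval I, let ν(s) = (−γ₂'(s), γ₁'(s)) be its unit normal, let u be C² on an open neighborhood of γ(I), and suppose Du(γ(s)) = ĉ·ν(s) for all s ∈ I and some constant ĉ ∈ ℝ. Then ⟨D²u(γ(s))·γ'(s), ν(s)⟩ = 0 for all s ∈ I; that is, γ'(s) and ν(s) are eigendirections of the Hessian D²u at every point of the curve. -/
open Set Metric Topology Asymptotics MvPolynomial Matrix

/-!
Differentiating `Du(γ(s)) = c'·ν(s)` along the curve gives `D²u(γ(s))·γ'(s) = c'·ν'(s)`, while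
differentiating `|γ'|² = 1` gives `⟨γ'', γ'⟩ = 0`. Since `ν' = (−γ₂'', γ₁'')`, this makes
`⟨D²u·γ', ν⟩ = c'·⟨ν', ν⟩ = c'·⟨γ'', γ'⟩ = 0`.
-/

theorem HasFDerivAt.pdx_eq {f : ℝ × ℝ → ℝ} {L : ℝ × ℝ →L[ℝ] ℝ} {p : ℝ × ℝ}
    (h : HasFDerivAt f L p) : pdx f p = L (1, 0) :=
  (h.comp_hasDerivAt p.1 ((hasDerivAt_id p.1).prodMk (hasDerivAt_const p.1 p.2))).deriv

theorem HasFDerivAt.pdy_eq {f : ℝ × ℝ → ℝ} {L : ℝ × ℝ →L[ℝ] ℝ} {p : ℝ × ℝ}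
    (h : HasFDerivAt f L p) : pdy f p = L (0, 1) :=
  (h.comp_hasDerivAt p.2 ((hasDerivAt_const p.2 p.1).prodMk (hasDerivAt_id p.2))).deriv

theorem DifferentiableAt.hasDerivAt_comp_curve {f : ℝ × ℝ → ℝ} {γ : ℝ → ℝ × ℝ} {v : ℝ × ℝ}
    {s : ℝ} (hf : DifferentiableAt ℝ f (γ s)) (hγ : HasDerivAt γ v s) :
    HasDerivAt (fun τ => f (γ τ)) (pdx f (γ s) * v.1 + pdy f (γ s) * v.2) s := by
  have hL := hf.hasFDerivAt
  have hv : v = v.1 • ((1 : ℝ), (0 : ℝ)) + v.2 • ((0 : ℝ), (1 : ℝ)) := by ext <;> simp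
  have hval : fderiv ℝ f (γ s) v = pdx f (γ s) * v.1 + pdy f (γ s) * v.2 := by
    conv_lhs => rw [hv, map_add, map_smul, map_smul, ← hL.pdx_eq, ← hL.pdy_eq]
    simp only [smul_eq_mul, mul_comm]
  exact hval ▸ hL.comp_hasDerivAt s hγ

theorem ContDiffAt.differentiableAt_pdx {u : ℝ × ℝ → ℝ} {p : ℝ × ℝ} (hu : ContDiffAt ℝ 2 u p) :
    DifferentiableAt ℝ (pdx u) p := by
  have hpdx : pdx u =ᶠ[𝓝 p] fun q => fderiv ℝ u q (1, 0) :=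
    (hu.eventually (by simp)).mono fun q hq => (hq.differentiableAt two_ne_zero).hasFDerivAt.pdx_eq
  have hDu := (hu.fderiv_right (m := 1) le_rfl).differentiableAt one_ne_zero
  exact (hDu.clm_apply (differentiableAt_const _)).congr_of_eventuallyEq hpdx

theorem ContDiffAt.differentiableAt_pdy {u : ℝ × ℝ → ℝ} {p : ℝ × ℝ} (hu : ContDiffAt ℝ 2 u p) :
    DifferentiableAt ℝ (pdy u) p := by
  have hpdy : pdy u =ᶠ[𝓝 p] fun q => fderiv ℝ u q (0, 1) :=
    (hu.eventually (by simp)).mono fun q hq => (hq.differentiableAt two_ne_zero).hasFDerivAt.pdy_eq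
  have hDu := (hu.fderiv_right (m := 1) le_rfl).differentiableAt one_ne_zero
  exact (hDu.clm_apply (differentiableAt_const _)).congr_of_eventuallyEq hpdy

theorem ContDiffAt.hasDerivAt_deriv {𝕜 F : Type*} [NontriviallyNormedField 𝕜]
    [NormedAddCommGroup F] [NormedSpace 𝕜 F] {f : 𝕜 → F} {s : 𝕜} (hf : ContDiffAt 𝕜 2 f s) :
    HasDerivAt (deriv f) (deriv (deriv f) s) s :=
  ((hf.derivWithin (m := 1) le_rfl).differentiableAt one_ne_zero).hasDerivAt

theorem HasDerivAt.mul_add_mul_eq_zero_of_sq_add_sq_const {f g : ℝ → ℝ} {f' g' c s : ℝ}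
    (hf : HasDerivAt f f' s) (hg : HasDerivAt g g' s) (hc : ∀ᶠ t in 𝓝 s, f t ^ 2 + g t ^ 2 = c) :
    f s * f' + g s * g' = 0 := by
  have hsum := (hf.pow 2).add (hg.pow 2)
  have hzero := (hasDerivAt_const s c).congr_of_eventuallyEq hc
  have := hsum.unique hzero
  push_cast at this
  linarith

theorem boundary_directions_are_eigendirections_general
    (I : Set ℝ) (hIopen : IsOpen I)
    (γ : ℝ → ℝ × ℝ) (hγ : ContDiffOn ℝ 2 γ I)
    (hunit : ∀ s ∈ I,
      (deriv (fun τ => (γ τ).1) s) ^ 2 + (deriv (fun τ => (γ τ).2) s) ^ 2 = 1)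
    (u : ℝ × ℝ → ℝ) (W : Set (ℝ × ℝ)) (hWopen : IsOpen W) (hWγ : γ '' I ⊆ W)
    (hu : ContDiffOn ℝ 2 u W)
    (c' : ℝ)
    (hgrad : ∀ s ∈ I,
      pdx u (γ s) = c' * (-(deriv (fun τ => (γ τ).2) s)) ∧
      pdy u (γ s) = c' * deriv (fun τ => (γ τ).1) s) :
    ∀ s ∈ I,
      (pdx (pdx u) (γ s) * deriv (fun τ => (γ τ).1) s
          + pdy (pdx u) (γ s) * deriv (fun τ => (γ τ).2) s)
            * (-(deriv (fun τ => (γ τ).2) s))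
        + (pdx (pdy u) (γ s) * deriv (fun τ => (γ τ).1) s
          + pdy (pdy u) (γ s) * deriv (fun τ => (γ τ).2) s)
            * deriv (fun τ => (γ τ).1) s = 0 := by
  intro s hs
  have hI : ∀ᶠ τ in 𝓝 s, τ ∈ I := hIopen.mem_nhds hs
  have hγs : ContDiffAt ℝ 2 γ s := hγ.contDiffAt hI
  have hγ₁ : ContDiffAt ℝ 2 (fun τ => (γ τ).1) s := hγs.fst
  have hγ₂ : ContDiffAt ℝ 2 (fun τ => (γ τ).2) s := hγs.snd
  have hus : ContDiffAt ℝ 2 u (γ s) := hu.contDiffAt (hWopen.mem_nhds (hWγ ⟨s, hs, rfl⟩))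
  have hvel : HasDerivAt γ (deriv (fun τ => (γ τ).1) s, deriv (fun τ => (γ τ).2) s) s :=
    (hγ₁.differentiableAt two_ne_zero).hasDerivAt.prodMk
      (hγ₂.differentiableAt two_ne_zero).hasDerivAt
  have horth := hγ₁.hasDerivAt_deriv.mul_add_mul_eq_zero_of_sq_add_sq_const
    hγ₂.hasDerivAt_deriv (hI.mono hunit)
  have hx := (hus.differentiableAt_pdx.hasDerivAt_comp_curve hvel).unique
    ((hγ₂.hasDerivAt_deriv.neg.const_mul c').congr_of_eventuallyEq
      (hI.mono fun τ hτ => (hgrad τ hτ).1))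
  have hy := (hus.differentiableAt_pdy.hasDerivAt_comp_curve hvel).unique
    ((hγ₁.hasDerivAt_deriv.const_mul c').congr_of_eventuallyEq
      (hI.mono fun τ hτ => (hgrad τ hτ).2))
  rw [hx, hy]
  linear_combination c' * horth

/-- If `γ` is a `C²` unit-speed curve on an interval `I` with unit normal
`ν = (−γ₂', γ₁')`, `u` is `C²` on an open neighborhood of `γ(I)`, and
`Du(γ(s)) = c'·ν(s)` for a constant `c'`, then `⟨D²u(γ(s))·γ'(s), ν(s)⟩ = 0` for all
`s ∈ I`, i.e. `γ'` and `ν` are eigendirections of the Hessian along the curve. -/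
theorem boundary_directions_are_eigendirections
    (I : Set ℝ) (hIopen : IsOpen I) (hIint : I.OrdConnected)
    (γ : ℝ → ℝ × ℝ) (hγ : ContDiffOn ℝ 2 γ I)
    (hunit : ∀ s ∈ I,
      (deriv (fun τ => (γ τ).1) s) ^ 2 + (deriv (fun τ => (γ τ).2) s) ^ 2 = 1)
    (u : ℝ × ℝ → ℝ) (W : Set (ℝ × ℝ)) (hWopen : IsOpen W) (hWγ : γ '' I ⊆ W)
    (hu : ContDiffOn ℝ 2 u W)
    (c' : ℝ)
    (hgrad : ∀ s ∈ I,
      pdx u (γ s) = c' * (-(deriv (fun τ => (γ τ).2) s)) ∧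
      pdy u (γ s) = c' * deriv (fun τ => (γ τ).1) s) :
    ∀ s ∈ I,
      (pdx (pdx u) (γ s) * deriv (fun τ => (γ τ).1) s
          + pdy (pdx u) (γ s) * deriv (fun τ => (γ τ).2) s)
            * (-(deriv (fun τ => (γ τ).2) s))
        + (pdx (pdy u) (γ s) * deriv (fun τ => (γ τ).1) s
          + pdy (pdy u) (γ s) * deriv (fun τ => (γ τ).2) s)
            * deriv (fun τ => (γ τ).1) s = 0 :=
  boundary_directions_are_eigendirections_general I hIopen γ hγ hunit u W hWopen hWγ hu c' hgrad
end

section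
/- Let I ⊂ (0,∞) be an open interval, let c₀, c ∈ ℝ, and let v be a real analytic function on I satisfying 1 + v'(ρ)² − (2(c₀ + v(ρ))/ρ)·v'(ρ) = c² for all ρ ∈ I. Then either there exists t ∈ ℝ with v(ρ) = −c₀ + tρ for all ρ ∈ I, or there exist t₁, t₂ ∈ ℝ with v(ρ) = t₁ρ² + t₂ for all ρ ∈ I. -/
open Set

/-- A function with derivative zero on a convex open set is constant there. -/
lemma const_of_hasDerivAt_zero' {s : Set ℝ} (hs : Convex ℝ s) (hso : IsOpen s)
    {h : ℝ → ℝ} (hd : ∀ x ∈ s, HasDerivAt h 0 x) {x y : ℝ} (hx : x ∈ s) (hy : y ∈ s) :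
    h x = h y := by
  apply hs.is_const_of_fderivWithin_eq_zero
    (fun z hz => ((hd z hz).differentiableAt).differentiableWithinAt) ?_ hx hy
  intro z hz
  rw [fderivWithin_of_isOpen hso hz, (hd z hz).hasFDerivAt.fderiv]
  ext
  simp

/-- If `v` is real analytic on an open interval `I ⊂ (0,∞)` and satisfies
`1 + v'(ρ)² − (2(c₀+v(ρ))/ρ) v'(ρ) = c²` on `I`, then `v(ρ) = −c₀ + tρ` or
`v(ρ) = t₁ρ² + t₂` on `I`. -/
theorem ode_solutions_linear_or_quadratic
    (a b : ℝ) (hI : Ioo a b ⊆ Ioi (0 : ℝ))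
    (c₀ c : ℝ) (v : ℝ → ℝ) (hv : AnalyticOnNhd ℝ v (Ioo a b))
    (hode : ∀ ρ ∈ Ioo a b,
      1 + (deriv v ρ) ^ 2 - 2 * (c₀ + v ρ) / ρ * deriv v ρ = c ^ 2) :
    (∃ t : ℝ, ∀ ρ ∈ Ioo a b, v ρ = -c₀ + t * ρ) ∨
    (∃ t₁ t₂ : ℝ, ∀ ρ ∈ Ioo a b, v ρ = t₁ * ρ ^ 2 + t₂) := by
  rcases le_or_gt b a with hba | hab
  · left
    exact ⟨0, fun ρ hρ => absurd hρ (by rw [Ioo_eq_empty (not_lt.mpr hba)]; simp)⟩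
  set x₀ : ℝ := (a + b) / 2 with hx₀def
  have hx₀ : x₀ ∈ Ioo a b := ⟨by linarith, by linarith⟩
  have hne : ∀ ρ ∈ Ioo a b, ρ ≠ 0 := fun ρ hρ => (hI hρ).ne'
  -- analyticity of derivatives
  have hv1 : AnalyticOnNhd ℝ (deriv v) (Ioo a b) := hv.deriv
  have hv2 : AnalyticOnNhd ℝ (deriv (deriv v)) (Ioo a b) := hv1.deriv
  -- the two factors
  set f : ℝ → ℝ := fun ρ => ρ * deriv v ρ - (c₀ + v ρ) with hfdef
  set g : ℝ → ℝ := fun ρ => ρ * deriv (deriv v) ρ - deriv v ρ with hgdef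
  have hfa : AnalyticOnNhd ℝ f (Ioo a b) := by
    exact ((analyticOnNhd_id).mul hv1).sub ((analyticOnNhd_const).add hv)
  have hga : AnalyticOnNhd ℝ g (Ioo a b) := by
    exact ((analyticOnNhd_id).mul hv2).sub hv1
  -- the multiplied-through ODE
  have e2 : ∀ ρ ∈ Ioo a b, ρ + ρ * (deriv v ρ) ^ 2 - 2 * (c₀ + v ρ) * deriv v ρ = c ^ 2 * ρ := by
    intro ρ hρ
    have h := hode ρ hρ
    have hρ0 := hne ρ hρ
    field_simp at h
    linarith
  -- the product of the factors vanishes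
  have hfg : ∀ ρ ∈ Ioo a b, f ρ * g ρ = 0 := by
    intro ρ hρ
    have hρ0 := hne ρ hρ
    set G : ℝ → ℝ := fun x => x + x * (deriv v x) ^ 2 - 2 * (c₀ + v x) * deriv v x - c ^ 2 * x
      with hGdef
    have hG0 : ∀ᶠ x in nhds ρ, G x = 0 := by
      filter_upwards [isOpen_Ioo.mem_nhds hρ] with x hx
      have := e2 x hx
      simp only [hGdef]
      linarith
    have hdv : HasDerivAt v (deriv v ρ) ρ := (hv ρ hρ).differentiableAt.hasDerivAt
    have hdv' : HasDerivAt (deriv v) (deriv (deriv v) ρ) ρ :=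
      (hv1 ρ hρ).differentiableAt.hasDerivAt
    have hGd : HasDerivAt G
        (1 + (1 * deriv v ρ ^ 2 + id ρ * (↑(2:ℕ) * deriv v ρ ^ (2 - 1) * deriv (deriv v) ρ)) -
          ((0 * (c₀ + v ρ) + 2 * (0 + deriv v ρ)) * deriv v ρ
            + 2 * (c₀ + v ρ) * deriv (deriv v) ρ) - (0 * id ρ + c ^ 2 * 1)) ρ :=
      (((hasDerivAt_id ρ).add ((hasDerivAt_id ρ).mul (hdv'.pow 2))).sub
        ((((hasDerivAt_const ρ (2:ℝ)).mul ((hasDerivAt_const ρ c₀).add hdv)).mul hdv'))).sub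
        ((hasDerivAt_const ρ (c^2)).mul (hasDerivAt_id ρ))
    have hGd0 : HasDerivAt G 0 ρ :=
      (hasDerivAt_const ρ (0:ℝ)).congr_of_eventuallyEq hG0
    have e1 := hGd.unique hGd0
    simp only [id_eq, Nat.cast_ofNat, pow_one] at e1
    have e2' := e2 ρ hρ
    simp only [hfdef, hgdef]
    norm_num at e1
    linear_combination (ρ / 2) * e1 - (1 / 2) * e2'
  -- dichotomy by the identity principle
  have hdich : (∀ ρ ∈ Ioo a b, f ρ = 0) ∨ (∀ ρ ∈ Ioo a b, g ρ = 0) := by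
    by_cases hf : ∀ ρ ∈ Ioo a b, f ρ = 0
    · exact Or.inl hf
    · right
      push_neg at hf
      obtain ⟨x, hx, hfx⟩ := hf
      have hfne : ∀ᶠ y in nhds x, f y ≠ 0 :=
        ((hfa x hx).continuousAt).eventually_ne hfx
      have hg0 : g =ᶠ[nhds x] 0 := by
        filter_upwards [hfne, isOpen_Ioo.mem_nhds hx] with y hy1 hy2
        have := hfg y hy2
        rcases mul_eq_zero.mp this with h | h
        · exact absurd h hy1
        · exact h
      have := hga.eqOn_zero_of_preconnected_of_eventuallyEq_zero isPreconnected_Ioo hx hg0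
      exact fun ρ hρ => this hρ
  rcases hdich with hf0 | hg0
  · -- linear case
    left
    refine ⟨(c₀ + v x₀) / x₀, fun ρ hρ => ?_⟩
    have hconst : (c₀ + v ρ) / ρ = (c₀ + v x₀) / x₀ := by
      apply const_of_hasDerivAt_zero' (convex_Ioo a b) isOpen_Ioo
        (h := fun x => (c₀ + v x) / x) ?_ hρ hx₀
      intro z hz
      have hz0 := hne z hz
      have hdv : HasDerivAt v (deriv v z) z := (hv z hz).differentiableAt.hasDerivAt
      have hd : HasDerivAt (fun x => (c₀ + v x) / x)
          (((0 + deriv v z) * z - (c₀ + v z) * 1) / z ^ 2) z :=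
        ((hasDerivAt_const z c₀).add hdv).div (hasDerivAt_id z) hz0
      convert hd using 1
      have := hf0 z hz
      simp only [hfdef] at this
      have hz2 : z ^ 2 ≠ 0 := pow_ne_zero 2 hz0
      field_simp
      linarith
    have hρ0 := hne ρ hρ
    rw [div_eq_iff hρ0] at hconst
    linarith
  · -- quadratic case
    right
    set k : ℝ := deriv v x₀ / x₀ with hkdef
    refine ⟨k / 2, v x₀ - k / 2 * x₀ ^ 2, fun ρ hρ => ?_⟩
    have hderiv_lin : ∀ z ∈ Ioo a b, deriv v z = k * z := by
      intro z hz
      have hconst : deriv v z / z = deriv v x₀ / x₀ := by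
        apply const_of_hasDerivAt_zero' (convex_Ioo a b) isOpen_Ioo
          (h := fun x => deriv v x / x) ?_ hz hx₀
        intro w hw
        have hw0 := hne w hw
        have hdv' : HasDerivAt (deriv v) (deriv (deriv v) w) w :=
          (hv1 w hw).differentiableAt.hasDerivAt
        have hd : HasDerivAt (fun x => deriv v x / x)
            ((deriv (deriv v) w * w - deriv v w * 1) / w ^ 2) w :=
          hdv'.div (hasDerivAt_id w) hw0
        convert hd using 1
        have := hg0 w hw
        simp only [hgdef] at this
        have hw2 : w ^ 2 ≠ 0 := pow_ne_zero 2 hw0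
        field_simp
        linarith
      have hz0 := hne z hz
      rw [← hkdef, div_eq_iff hz0] at hconst
      linarith
    have hconst2 : v ρ - k / 2 * ρ ^ 2 = v x₀ - k / 2 * x₀ ^ 2 := by
      apply const_of_hasDerivAt_zero' (convex_Ioo a b) isOpen_Ioo
        (h := fun x => v x - k / 2 * x ^ 2) ?_ hρ hx₀
      intro z hz
      have hdv : HasDerivAt v (deriv v z) z := (hv z hz).differentiableAt.hasDerivAt
      have hd : HasDerivAt (fun x => v x - k / 2 * x ^ 2)
          (deriv v z - k / 2 * (2 * z ^ 1)) z :=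
        hdv.sub ((hasDerivAt_pow 2 z).const_mul (k / 2))
      convert hd using 1
      rw [hderiv_lin z hz]
      ring
    linarith [hconst2]
end

section
/- There exist a bounded, simply connected domain Ω ⊂ ℝ² with real analytic boundary, a function u ∈ C^∞ on the closure of Ω that is not identically zero and is not radial with respect to any point of ℝ², and a C^∞ function Φ : ℝ² → ℝ whose zero set has empty interior, such that Φ(Δu, det D²u) = 0 in Ω and u = 0, Du = 0 on ∂Ω. In particular, the radial-symmetry conclusion of the main theorem fails if real analyticity of u is weakened to C^∞ smoothness. -/
/-!
Take `u = g(|p - c₊|²) + g(|p - c₋|²)`, two smooth radial bumps with disjoint supports inside the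
unit disk. Near every point `u` agrees with a single radial function `f(|p - c|²)`, for which
`(Δu, det D²u) = γ(|p - c|²)` with `γ(t) = (4t g'' + 4g', 8t g'' g' + 4g'²)`. Hence
`(Δu, det D²u)` always lies on the compact `C^∞` curve `S = γ([0, ε])`; a curve has Hausdorff
dimension `1`, so `S` has empty interior, and `Φ` is any smooth function with zero set exactly `S`.
The bumps vanish near the unit circle, and `u` is not radial about any `z`: the circle about `z`
through the bump centre farther from `z` also meets the closed disk away from both bumps, where
`u = 0`.
-/

open Set Metric Topology Asymptotics MvPolynomial Matrix

open scoped ContDiff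

section Locality

variable {f g : ℝ × ℝ → ℝ} {p : ℝ × ℝ}

theorem Filter.EventuallyEq.pdx (h : f =ᶠ[𝓝 p] g) : pdx f =ᶠ[𝓝 p] pdx g := by
  filter_upwards [h.eventuallyEq_nhds] with q hq
  have hline : Tendsto (fun x : ℝ => (x, q.2)) (𝓝 q.1) (𝓝 q) :=
    (Continuous.prodMk_left q.2).tendsto' _ _ rfl
  exact EventuallyEq.deriv_eq (hline.eventually hq)

theorem Filter.EventuallyEq.pdy (h : f =ᶠ[𝓝 p] g) : pdy f =ᶠ[𝓝 p] pdy g := by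
  filter_upwards [h.eventuallyEq_nhds] with q hq
  have hline : Tendsto (fun y : ℝ => (q.1, y)) (𝓝 q.2) (𝓝 q) :=
    (Continuous.prodMk_right q.1).tendsto' _ _ rfl
  exact EventuallyEq.deriv_eq (hline.eventually hq)

theorem Filter.EventuallyEq.lap_eq (h : f =ᶠ[𝓝 p] g) : lap f p = lap g p := by
  rw [lap, lap, h.pdx.pdx.eq_of_nhds, h.pdy.pdy.eq_of_nhds]

theorem Filter.EventuallyEq.hessDet_eq (h : f =ᶠ[𝓝 p] g) : hessDet f p = hessDet g p := by
  rw [hessDet, hessDet, h.pdx.pdx.eq_of_nhds, h.pdy.pdy.eq_of_nhds, h.pdy.pdx.eq_of_nhds]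

theorem pdx_eq_zero_of_eventuallyEq_zero (h : f =ᶠ[𝓝 p] 0) : pdx f p = 0 := by
  simpa [pdx] using h.pdx.eq_of_nhds

theorem pdy_eq_zero_of_eventuallyEq_zero (h : f =ᶠ[𝓝 p] 0) : pdy f p = 0 := by
  simpa [pdy] using h.pdy.eq_of_nhds

end Locality

def sqDist (c p : ℝ × ℝ) : ℝ := (p.1 - c.1) ^ 2 + (p.2 - c.2) ^ 2

def radial (f : ℝ → ℝ) (c p : ℝ × ℝ) : ℝ := f (sqDist c p)

/-- `(Δu, det D²u)` of the radial function `u = f(|p - c|²)`, as a function of `t = |p - c|²`. -/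
noncomputable def radialInvariants (f : ℝ → ℝ) (t : ℝ) : ℝ × ℝ :=
  (4 * t * deriv (deriv f) t + 4 * deriv f t,
    8 * t * deriv (deriv f) t * deriv f t + 4 * deriv f t ^ 2)

section Radial

variable {f : ℝ → ℝ} {n : WithTop ℕ∞} (c : ℝ × ℝ)

theorem contDiff_sqDist : ContDiff ℝ n (sqDist c) := by
  unfold sqDist; fun_prop

theorem ContDiff.radial (hf : ContDiff ℝ n f) : ContDiff ℝ n (radial f c) :=
  hf.comp (contDiff_sqDist c)

theorem continuous_sqDist : Continuous (sqDist c) := (contDiff_sqDist (n := 0) c).continuous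

theorem radial_eventuallyEq_zero {ε : ℝ} (hf : EqOn f 0 (Ici ε)) {p : ℝ × ℝ}
    (hp : ε < sqDist c p) : radial f c =ᶠ[𝓝 p] 0 := by
  filter_upwards [(continuous_sqDist c).continuousAt.eventually (lt_mem_nhds hp)] with q hq
  exact hf (le_of_lt hq)

theorem hasDerivAt_radial_fst (hf : Differentiable ℝ f) (x y : ℝ) :
    HasDerivAt (fun x => radial f c (x, y))
      (deriv f (sqDist c (x, y)) * (2 * (x - c.1))) x := by
  have h : HasDerivAt (fun x => sqDist c (x, y)) (2 * (x - c.1)) x := by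
    simpa [sqDist] using (((hasDerivAt_id x).sub_const c.1).pow 2).add_const ((y - c.2) ^ 2)
  exact (hf _).hasDerivAt.comp x h

theorem hasDerivAt_radial_snd (hf : Differentiable ℝ f) (x y : ℝ) :
    HasDerivAt (fun y => radial f c (x, y))
      (deriv f (sqDist c (x, y)) * (2 * (y - c.2))) y := by
  have h : HasDerivAt (fun y => sqDist c (x, y)) (2 * (y - c.2)) y := by
    simpa [sqDist] using (((hasDerivAt_id y).sub_const c.2).pow 2).const_add ((x - c.1) ^ 2)
  exact (hf _).hasDerivAt.comp y h

theorem pdx_radial (hf : Differentiable ℝ f) :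
    pdx (radial f c) = fun p => radial (deriv f) c p * (2 * (p.1 - c.1)) :=
  funext fun p => (hasDerivAt_radial_fst c hf p.1 p.2).deriv

theorem pdy_radial (hf : Differentiable ℝ f) :
    pdy (radial f c) = fun p => radial (deriv f) c p * (2 * (p.2 - c.2)) :=
  funext fun p => (hasDerivAt_radial_snd c hf p.1 p.2).deriv

variable {c}

theorem pdx_pdx_radial (hf : Differentiable ℝ f) (hf' : Differentiable ℝ (deriv f))
    (p : ℝ × ℝ) : pdx (pdx (radial f c)) p =
    deriv (deriv f) (sqDist c p) * (2 * (p.1 - c.1)) ^ 2 + 2 * deriv f (sqDist c p) := by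
  have hlin : HasDerivAt (fun x => 2 * (x - c.1)) 2 p.1 := by
    simpa using ((hasDerivAt_id p.1).sub_const c.1).const_mul 2
  rw [pdx_radial c hf, pdx]
  dsimp only
  rw [((hasDerivAt_radial_fst c hf' p.1 p.2).fun_mul hlin).deriv, radial]
  ring

theorem pdy_pdy_radial (hf : Differentiable ℝ f) (hf' : Differentiable ℝ (deriv f))
    (p : ℝ × ℝ) : pdy (pdy (radial f c)) p =
    deriv (deriv f) (sqDist c p) * (2 * (p.2 - c.2)) ^ 2 + 2 * deriv f (sqDist c p) := by
  have hlin : HasDerivAt (fun y => 2 * (y - c.2)) 2 p.2 := by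
    simpa using ((hasDerivAt_id p.2).sub_const c.2).const_mul 2
  rw [pdy_radial c hf, pdy]
  dsimp only
  rw [((hasDerivAt_radial_snd c hf' p.1 p.2).fun_mul hlin).deriv, radial]
  ring

theorem pdx_pdy_radial (hf : Differentiable ℝ f) (hf' : Differentiable ℝ (deriv f))
    (p : ℝ × ℝ) : pdx (pdy (radial f c)) p =
    deriv (deriv f) (sqDist c p) * (2 * (p.1 - c.1)) * (2 * (p.2 - c.2)) := by
  rw [pdy_radial c hf, pdx]
  dsimp only
  rw [((hasDerivAt_radial_fst c hf' p.1 p.2).mul_const _).deriv]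

theorem lap_hessDet_radial (hf : Differentiable ℝ f) (hf' : Differentiable ℝ (deriv f))
    (p : ℝ × ℝ) :
    (lap (radial f c) p, hessDet (radial f c) p) = radialInvariants f (sqDist c p) := by
  rw [lap, hessDet, pdx_pdx_radial hf hf', pdy_pdy_radial hf hf', pdx_pdy_radial hf hf',
    radialInvariants, Prod.mk.injEq]
  constructor <;> (simp only [sqDist]; ring)

theorem ContDiff.radialInvariants (hf : ContDiff ℝ ∞ f) :
    ContDiff ℝ ∞ (radialInvariants f) := by
  have h₁ := (contDiff_infty_iff_deriv.1 hf).2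
  have h₂ := (contDiff_infty_iff_deriv.1 h₁).2
  unfold _root_.radialInvariants
  fun_prop

end Radial

theorem deriv_eqOn_zero_of_eqOn_Ici {f : ℝ → ℝ} {a : ℝ} (hf : EqOn f 0 (Ici a)) :
    EqOn (deriv f) 0 (Ici a) := by
  intro t (ht : a ≤ t)
  have h : ∀ᶠ s in 𝓝[>] t, f s = 0 :=
    eventually_nhdsWithin_of_forall fun s (hs : t < s) => hf (show a ≤ s by linarith)
  exact deriv_zero_of_frequently_const (h.frequently.filter_mono (nhdsGT_le_nhdsNE t))

noncomputable def bumpProfile (ε t : ℝ) : ℝ := expNegInvGlue (ε - t)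

section BumpProfile

variable (ε : ℝ)

theorem contDiff_bumpProfile {n : ℕ∞} : ContDiff ℝ n (bumpProfile ε) :=
  expNegInvGlue.contDiff.comp (contDiff_const.sub contDiff_id)

theorem bumpProfile_pos {t : ℝ} (ht : t < ε) : 0 < bumpProfile ε t :=
  expNegInvGlue.pos_of_pos (sub_pos.2 ht)

theorem bumpProfile_eqOn_zero : EqOn (bumpProfile ε) 0 (Ici ε) := fun _ ht =>
  expNegInvGlue.zero_of_nonpos (sub_nonpos.2 ht)

end BumpProfile

theorem radialInvariants_bumpProfile_mem {ε t : ℝ} (hε : 0 ≤ ε) (ht : 0 ≤ t) :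
    radialInvariants (bumpProfile ε) t ∈ radialInvariants (bumpProfile ε) '' Icc 0 ε := by
  rcases le_total t ε with htε | hεt
  · exact mem_image_of_mem _ ⟨ht, htε⟩
  · have h₁ := deriv_eqOn_zero_of_eqOn_Ici (bumpProfile_eqOn_zero ε)
    have h₂ := deriv_eqOn_zero_of_eqOn_Ici h₁
    refine ⟨ε, ⟨hε, le_rfl⟩, ?_⟩
    simp [radialInvariants, h₁ hεt, h₂ hεt, h₁ (le_refl ε), h₂ (le_refl ε)]

section Geometry

variable {E : Type*} [NormedAddCommGroup E] [NormedSpace ℝ E] [FiniteDimensional ℝ E]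

-- A `C¹` curve has Hausdorff dimension at most `1`, less than that of an open set.
theorem ContDiff.interior_image_eq_empty (hE : 2 ≤ Module.finrank ℝ E) {γ : ℝ → E}
    (hγ : ContDiff ℝ 1 γ) (s : Set ℝ) : interior (γ '' s) = ∅ := by
  by_contra h
  have hdim := Real.dimH_of_nonempty_interior (nonempty_iff_ne_empty.2 h)
  have hle := (dimH_mono (image_subset_range γ s)).trans hγ.dimH_range_le
  rw [hdim, Module.finrank_self] at hle
  exact absurd (Nat.cast_le.1 hle) (by omega)

theorem IsClosed.exists_contDiff_zeroSet_eq {n : ℕ∞} {s : Set E} (hs : IsClosed s) :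
    ∃ Φ : E → ℝ, ContDiff ℝ n Φ ∧ {z | Φ z = 0} = s := by
  obtain ⟨Φ, hsupp, hΦ, -⟩ := hs.isOpen_compl.exists_contDiff_support_eq (n := n)
  refine ⟨Φ, hΦ, ?_⟩
  rw [← compl_compl s, ← hsupp]
  ext z
  simp

end Geometry

theorem Complex.sphere_inter_sphere_nonempty (z c : ℂ) {r : ℝ} (hr₀ : 0 ≤ r)
    (hr : r ≤ 2 * ‖c - z‖) : (sphere z ‖c - z‖ ∩ sphere c r).Nonempty := by
  rcases eq_or_ne ‖c - z‖ 0 with hR | hR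
  · exact ⟨c, mem_sphere_iff_norm.2 rfl, by simp [show r = 0 by linarith]⟩
  -- rotate `c` about `z` by the angle `θ` whose chord `2 ‖c - z‖ sin (θ / 2)` is `r`
  set θ := 2 * Real.arcsin (r / (2 * ‖c - z‖))
  have hsin : Real.sin (θ / 2) = r / (2 * ‖c - z‖) := by
    rw [mul_div_cancel_left₀ _ two_ne_zero, Real.sin_arcsin]
    · exact le_trans (by norm_num) (div_nonneg hr₀ (by positivity))
    · exact (div_le_one (by positivity)).2 hr
  refine ⟨z + (c - z) * exp (I * θ), ?_, ?_⟩
  · rw [mem_sphere_iff_norm, add_sub_cancel_left, norm_mul, mul_comm I,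
      norm_exp_ofReal_mul_I, mul_one]
  · rw [mem_sphere_iff_norm, show z + (c - z) * exp (I * θ) - c = (c - z) * (exp (I * θ) - 1) by
      ring, norm_mul, norm_exp_I_mul_ofReal_sub_one, hsin, norm_mul, Real.norm_eq_abs,
      Real.norm_eq_abs, abs_of_nonneg (div_nonneg hr₀ (by positivity))]
    field_simp
    ring

def unitDisk : Set (ℝ × ℝ) := Complex.equivRealProdCLM '' ball 0 1

section UnitDisk

open Complex Real

theorem isOpen_unitDisk : IsOpen unitDisk :=
  equivRealProdCLM.toHomeomorph.isOpenMap _ isOpen_ball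

theorem convex_unitDisk : Convex ℝ unitDisk :=
  (convex_ball 0 1).linear_image equivRealProdCLM.toLinearMap

theorem closure_unitDisk : closure unitDisk = equivRealProdCLM '' closedBall 0 1 := by
  rw [← closure_ball (0 : ℂ) one_ne_zero]
  exact (equivRealProdCLM.toHomeomorph.image_closure _).symm

theorem mem_closure_unitDisk {w : ℂ} (hw : ‖w‖ ≤ 1) : equivRealProdCLM w ∈ closure unitDisk :=
  closure_unitDisk ▸ mem_image_of_mem _ (mem_closedBall_zero_iff.2 hw)

theorem frontier_unitDisk : frontier unitDisk = equivRealProdCLM '' sphere 0 1 := by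
  rw [← frontier_ball (0 : ℂ) one_ne_zero]
  exact (equivRealProdCLM.toHomeomorph.image_frontier _).symm

theorem isBounded_unitDisk : Bornology.IsBounded unitDisk :=
  ((isCompact_closedBall 0 1).image equivRealProdCLM.continuous).isBounded.subset
    (image_mono ball_subset_closedBall)

theorem simplyConnectedSpace_unitDisk : SimplyConnectedSpace unitDisk :=
  have : ContractibleSpace unitDisk :=
    convex_unitDisk.contractibleSpace ⟨_, mem_image_of_mem _ (mem_ball_self one_pos)⟩
  inferInstance

theorem exists_analytic_jordan_parametrization_frontier_unitDisk :
    ∃ (L : ℝ) (γ : ℝ → ℝ × ℝ), 0 < L ∧ AnalyticOnNhd ℝ γ univ ∧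
      (∀ s, γ (s + L) = γ s) ∧ InjOn γ (Ico 0 L) ∧ (∀ s, deriv γ s ≠ 0) ∧
      frontier unitDisk = range γ := by
  refine ⟨2 * π, equivRealProdCLM ∘ circleMap 0 1, by positivity,
    fun s _ => equivRealProdCLM.toContinuousLinearMap.analyticAt _ |>.comp
      (analyticOnNhd_circleMap 0 1 s trivial),
    fun s => congrArg equivRealProdCLM (periodic_circleMap 0 1 s),
    equivRealProdCLM.injective.comp_injOn (injOn_circleMap_of_abs_sub_le' one_ne_zero (by simp)),
    fun s => ?_, ?_⟩
  · rw [(equivRealProdCLM.hasFDerivAt.comp_hasDerivAt s (hasDerivAt_circleMap 0 1 s)).deriv,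
      ← deriv_circleMap 0]
    exact equivRealProdCLM.map_ne_zero_iff.2 (deriv_circleMap_ne_zero one_ne_zero)
  · rw [frontier_unitDisk, range_comp, range_circleMap, abs_one]

end UnitDisk

section TwoBumps

open Complex Filter

theorem sqDist_equivRealProdCLM (a w : ℂ) :
    sqDist (equivRealProdCLM a) (equivRealProdCLM w) = ‖w - a‖ ^ 2 := by
  rw [Complex.sq_norm, normSq_apply]
  simp [sqDist]
  ring

-- Bumps of radius `1/4` (the profile is applied to the squared distance) centred at `±1/2`.
noncomputable def twoBumps : ℝ × ℝ → ℝ :=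
  radial (bumpProfile (1 / 16)) (equivRealProdCLM (1 / 2)) +
    radial (bumpProfile (1 / 16)) (equivRealProdCLM (-1 / 2))

theorem contDiff_twoBumps {n : ℕ∞} : ContDiff ℝ n twoBumps :=
  ((contDiff_bumpProfile _).radial _).add ((contDiff_bumpProfile _).radial _)

theorem twoBumps_apply (w : ℂ) : twoBumps (equivRealProdCLM w) =
    bumpProfile (1 / 16) (‖w - 1 / 2‖ ^ 2) + bumpProfile (1 / 16) (‖w + 1 / 2‖ ^ 2) := by
  simp only [twoBumps, Pi.add_apply, radial, sqDist_equivRealProdCLM]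
  ring_nf

theorem radial_bumpProfile_eventuallyEq_zero {c w : ℂ} (h : 1 / 2 ≤ ‖w - c‖) :
    radial (bumpProfile (1 / 16)) (equivRealProdCLM c) =ᶠ[𝓝 (equivRealProdCLM w)] 0 :=
  radial_eventuallyEq_zero _ (bumpProfile_eqOn_zero _) (by
    rw [sqDist_equivRealProdCLM]; nlinarith)

theorem twoBumps_eventuallyEq_zero {w : ℂ} (h₁ : 1 / 2 ≤ ‖w - 1 / 2‖) (h₂ : 1 / 2 ≤ ‖w + 1 / 2‖) :
    twoBumps =ᶠ[𝓝 (equivRealProdCLM w)] 0 := by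
  have h₂' : 1 / 2 ≤ ‖w - -1 / 2‖ := by rwa [neg_div, sub_neg_eq_add]
  simpa only [twoBumps, add_zero] using
    (radial_bumpProfile_eventuallyEq_zero h₁).add (radial_bumpProfile_eventuallyEq_zero h₂')

theorem twoBumps_eventuallyEq_radial (p : ℝ × ℝ) :
    ∃ c : ℂ, twoBumps =ᶠ[𝓝 p] radial (bumpProfile (1 / 16)) (equivRealProdCLM c) := by
  obtain ⟨w, rfl⟩ := equivRealProdCLM.surjective p
  have h : 1 ≤ ‖w - 1 / 2‖ + ‖w - -1 / 2‖ := by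
    have := norm_sub_le (w - -1 / 2) (w - 1 / 2)
    rw [show w - -1 / 2 - (w - 1 / 2) = 1 by ring, norm_one] at this
    linarith
  rcases le_total (1 / 2) ‖w - -1 / 2‖ with h₂ | h₂
  · refine ⟨1 / 2, ?_⟩
    simpa only [twoBumps, add_zero] using
      EventuallyEq.rfl.add (radial_bumpProfile_eventuallyEq_zero h₂)
  · refine ⟨-1 / 2, ?_⟩
    have h₁ : 1 / 2 ≤ ‖w - 1 / 2‖ := by linarith
    simpa only [twoBumps, zero_add] using
      (radial_bumpProfile_eventuallyEq_zero h₁).add EventuallyEq.rfl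

theorem lap_hessDet_twoBumps_mem (p : ℝ × ℝ) : (lap twoBumps p, hessDet twoBumps p) ∈
    radialInvariants (bumpProfile (1 / 16)) '' Icc 0 (1 / 16) := by
  obtain ⟨c, hc⟩ := twoBumps_eventuallyEq_radial p
  obtain ⟨hf, hf'⟩ := contDiff_infty_iff_deriv.1 (contDiff_bumpProfile (1 / 16) (n := ⊤))
  rw [hc.lap_eq, hc.hessDet_eq, lap_hessDet_radial hf (hf'.differentiable (by simp))]
  exact radialInvariants_bumpProfile_mem (by norm_num) (by unfold sqDist; positivity)

theorem twoBumps_pdx_pdy_eq_zero_of_mem_frontier {p : ℝ × ℝ} (hp : p ∈ frontier unitDisk) :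
    twoBumps p = 0 ∧ pdx twoBumps p = 0 ∧ pdy twoBumps p = 0 := by
  rw [frontier_unitDisk] at hp
  obtain ⟨w, hw, rfl⟩ := hp
  rw [mem_sphere_zero_iff_norm] at hw
  have h₁ := norm_sub_norm_le w (1 / 2)
  have h₂ := norm_sub_norm_le w (-1 / 2)
  norm_num [hw] at h₁ h₂
  have h := twoBumps_eventuallyEq_zero (w := w) (by linarith) (by linarith)
  exact ⟨h.eq_of_nhds, pdx_eq_zero_of_eventuallyEq_zero h, pdy_eq_zero_of_eventuallyEq_zero h⟩

theorem twoBumps_center_pos {c : ℂ} (hc : c = 1 / 2 ∨ c = -1 / 2) :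
    0 < twoBumps (equivRealProdCLM c) := by
  have h := bumpProfile_pos (1 / 16) (t := 0) (by norm_num)
  have h₁ := bumpProfile_eqOn_zero (1 / 16) (show (1 / 16 : ℝ) ≤ 1 by norm_num)
  rcases hc with rfl | rfl <;> rw [twoBumps_apply] <;> norm_num at h h₁ ⊢ <;> linarith

theorem twoBumps_not_radial : ¬∃ z : ℝ × ℝ, ∀ q₁ ∈ closure unitDisk, ∀ q₂ ∈ closure unitDisk,
    sqDist z q₁ = sqDist z q₂ → twoBumps q₁ = twoBumps q₂ := by
  rintro ⟨z, hz⟩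
  obtain ⟨z, rfl⟩ := equivRealProdCLM.surjective z
  obtain ⟨c, hc, hcz⟩ : ∃ c : ℂ, (c = 1 / 2 ∨ c = -1 / 2) ∧ 1 / 4 ≤ ‖c - z‖ := by
    have := norm_sub_le (1 / 2 - z) (-1 / 2 - z)
    rw [show 1 / 2 - z - (-1 / 2 - z) = 1 by ring, norm_one] at this
    rcases le_total (1 / 4) ‖1 / 2 - z‖ with h | h
    · exact ⟨1 / 2, .inl rfl, h⟩
    · exact ⟨-1 / 2, .inr rfl, by linarith⟩
  obtain ⟨w, hwz, hwc⟩ := sphere_inter_sphere_nonempty z c (r := 1 / 2) (by norm_num)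
    (by linarith)
  rw [mem_sphere_iff_norm] at hwz hwc
  have hc_norm : ‖c‖ = 1 / 2 := by rcases hc with rfl | rfl <;> norm_num
  have hw : ‖w‖ ≤ 1 := by
    calc ‖w‖ ≤ ‖w - c‖ + ‖c‖ := norm_le_norm_sub_add w c
      _ = 1 := by rw [hwc, hc_norm]; norm_num
  have h_zero : twoBumps (equivRealProdCLM w) = 0 := by
    have h := norm_sub_le (w + c) (w - c)
    rw [show w + c - (w - c) = 2 * c by ring, norm_mul, hc_norm] at h
    refine (twoBumps_eventuallyEq_zero ?_ ?_).eq_of_nhds <;> rcases hc with rfl | rfl <;>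
      norm_num [sub_eq_add_neg] at hwc h ⊢ <;> linarith
  have h_eq := hz _ (mem_closure_unitDisk (hc_norm.trans_le (by norm_num))) _
    (mem_closure_unitDisk hw) (by rw [sqDist_equivRealProdCLM, sqDist_equivRealProdCLM, hwz])
  exact (twoBumps_center_pos hc).ne' (h_eq.trans h_zero)

end TwoBumps

/-- **Example (necessity of real analyticity).** There exist a bounded, simply connected
domain `Ω ⊂ ℝ²` with real analytic boundary, a `C^∞` function `u` on `closure Ω`, not
identically zero and not radial about any point, and a `C^∞` function `Φ : ℝ² → ℝ` whose
zero set has empty interior, with `Φ(Δu, det D²u) = 0` in `Ω` and `u = 0`, `Du = 0` on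
`∂Ω`. -/
theorem smooth_counterexample_exists :
    ∃ (Ω : Set (ℝ × ℝ)) (u : ℝ × ℝ → ℝ) (Φ : ℝ × ℝ → ℝ),
      IsOpen Ω ∧ IsConnected Ω ∧ Bornology.IsBounded Ω ∧ SimplyConnectedSpace Ω ∧
      -- `∂Ω` is the image of a real analytic regular periodic Jordan curve
      (∃ (L : ℝ) (γ : ℝ → ℝ × ℝ), 0 < L ∧ AnalyticOnNhd ℝ γ Set.univ ∧
        (∀ s, γ (s + L) = γ s) ∧ InjOn γ (Ico 0 L) ∧ (∀ s, deriv γ s ≠ 0) ∧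
        frontier Ω = range γ) ∧
      -- `u` is `C^∞` on `closure Ω`, not identically zero
      ContDiffOn ℝ (⊤ : ℕ∞) u (closure Ω) ∧ (∃ p ∈ closure Ω, u p ≠ 0) ∧
      -- `u` is not radial with respect to any point of `ℝ²`
      (¬∃ z : ℝ × ℝ, ∀ q₁ ∈ closure Ω, ∀ q₂ ∈ closure Ω,
        (q₁.1 - z.1) ^ 2 + (q₁.2 - z.2) ^ 2 = (q₂.1 - z.1) ^ 2 + (q₂.2 - z.2) ^ 2 →
        u q₁ = u q₂) ∧
      -- `Φ` is `C^∞` and its zero set has empty interior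
      ContDiff ℝ (⊤ : ℕ∞) Φ ∧ interior {z : ℝ × ℝ | Φ z = 0} = ∅ ∧
      -- the overdetermined problem
      (∀ p ∈ Ω, Φ (lap u p, hessDet u p) = 0) ∧
      (∀ p ∈ frontier Ω, u p = 0 ∧ pdx u p = 0 ∧ pdy u p = 0) := by
  have hcurve := (contDiff_bumpProfile (1 / 16) (n := ⊤)).radialInvariants
  obtain ⟨Φ, hΦ, hΦ_zero⟩ :=
    (isCompact_Icc.image hcurve.continuous).isClosed.exists_contDiff_zeroSet_eq (n := ⊤)
  refine ⟨unitDisk, twoBumps, Φ, isOpen_unitDisk,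
    convex_unitDisk.isConnected ⟨_, mem_image_of_mem _ (mem_ball_self one_pos)⟩,
    isBounded_unitDisk, simplyConnectedSpace_unitDisk,
    exists_analytic_jordan_parametrization_frontier_unitDisk,
    contDiff_twoBumps.contDiffOn,
    ⟨_, mem_closure_unitDisk (by norm_num), (twoBumps_center_pos (.inl rfl)).ne'⟩,
    twoBumps_not_radial, hΦ, ?_, fun p _ => ?_,
    fun _ hp => twoBumps_pdx_pdy_eq_zero_of_mem_frontier hp⟩
  · rw [hΦ_zero]
    exact (hcurve.of_le (by simp)).interior_image_eq_empty (by simp) _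
  · show (lap twoBumps p, hessDet twoBumps p) ∈ {z | Φ z = 0}
    rw [hΦ_zero]
    exact lap_hessDet_twoBumps_mem p
end
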